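/- Let Γ be a group generated by a finite symmetric set S and let Z = Z(Γ) be its center. The map sending a coset gZ to the tuple (g⁻¹sg)_{s∈S} ∈ ∏_{s∈S} Cl(s) is well defined and injective. Moreover, if gZ contains a representative of length ≤ n, then g⁻¹sg ∈ B_{2n+1} for every s ∈ S; hence |B̄_n(Γ/Z)| ≤ ∏_{s∈S} |Cl(s) ∩ B_{2n+1}|. -/

import Mathlib

def wordBall {Γ : Type*} [Group Γ] (S : Set Γ) (n : ℕ) : Set Γ :=
  {g | ∃ l : List Γ, l.length ≤ n ∧ (∀ x ∈ l, x ∈ S) ∧ l.prod = g}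

noncomputable def wlen {Γ : Type*} [Group Γ] (S : Set Γ) (g : Γ) : ℕ :=
  sInf {n | g ∈ wordBall S n}

def conjClass {Γ : Type*} [Group Γ] (h : Γ) : Set Γ := {y | ∃ g : Γ, g⁻¹ * h * g = y}

noncomputable def cosetLen {Γ : Type*} [Group Γ] (S : Set Γ) (C : Subgroup Γ)
    (x : Γ ⧸ C) : ℕ :=
  sInf {n | ∃ g : Γ, (QuotientGroup.mk g : Γ ⧸ C) = x ∧ wlen S g ≤ n}

def schreierBall {Γ : Type*} [Group Γ] (S : Set Γ) (C : Subgroup Γ) (n : ℕ) :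
    Set (Γ ⧸ C) := {x | cosetLen S C x ≤ n}

/-! Conjugation `g ↦ (g⁻¹ s g)_{s ∈ S}` identifies `Γ/Z(Γ)` with a set of tuples: two elements
induce the same tuple iff `a b⁻¹` commutes with every generator, i.e. lies in the centre. If
`|g| ≤ n` then `g⁻¹ s g` is a word of length `≤ 2n+1` in the conjugacy class of `s`, and every
coset in the ball of radius `n` has such a representative, so the ball injects into
`∏_{s ∈ S} (Cl(s) ∩ B_{2n+1})`. -/

section WordBall

variable {Γ : Type*} [Group Γ] {S : Set Γ}

lemma wordBall_mono {m n : ℕ} (h : m ≤ n) : wordBall S m ⊆ wordBall S n :=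
  fun _ ⟨l, hl, hS, hp⟩ => ⟨l, hl.trans h, hS, hp⟩

lemma mem_wordBall_one {s : Γ} (hs : s ∈ S) : s ∈ wordBall S 1 :=
  ⟨[s], by simp, by simpa using hs, by simp⟩

lemma mul_mem_wordBall {a b : Γ} {m n : ℕ} (ha : a ∈ wordBall S m) (hb : b ∈ wordBall S n) :
    a * b ∈ wordBall S (m + n) := by
  obtain ⟨l, hl, hS, rfl⟩ := ha
  obtain ⟨l', hl', hS', rfl⟩ := hb
  refine ⟨l ++ l', by simpa using Nat.add_le_add hl hl', ?_, List.prod_append⟩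
  simpa only [List.mem_append, or_imp, forall_and] using ⟨hS, hS'⟩

lemma inv_mem_wordBall (hsym : S⁻¹ = S) {a : Γ} {n : ℕ} (ha : a ∈ wordBall S n) :
    a⁻¹ ∈ wordBall S n := by
  obtain ⟨l, hl, hS, rfl⟩ := ha
  refine ⟨(l.map (·⁻¹)).reverse, by simpa using hl, ?_, by simp [List.prod_inv_reverse]⟩
  intro x hx
  obtain ⟨y, hy, rfl⟩ := List.mem_map.1 (List.mem_reverse.1 hx)
  exact hsym ▸ Set.inv_mem_inv.2 (hS y hy)

lemma conj_mem_wordBall (hsym : S⁻¹ = S) {g s : Γ} {n : ℕ} (hg : g ∈ wordBall S n)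
    (hs : s ∈ S) : g⁻¹ * s * g ∈ wordBall S (2 * n + 1) := by
  rw [show 2 * n + 1 = n + 1 + n by ring]
  exact mul_mem_wordBall (mul_mem_wordBall (inv_mem_wordBall hsym hg) (mem_wordBall_one hs)) hg

lemma exists_mem_wordBall (hsym : S⁻¹ = S) (hgen : Subgroup.closure S = ⊤) (g : Γ) :
    ∃ n, g ∈ wordBall S n := by
  have hg : g ∈ (Subgroup.closure S).toSubmonoid := hgen ▸ Subgroup.mem_top g
  rw [Subgroup.closure_toSubmonoid, hsym, Set.union_self] at hg
  obtain ⟨l, hl, hp⟩ := Submonoid.exists_list_of_mem_closure hg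
  exact ⟨l.length, l, le_rfl, hl, hp⟩

lemma mem_wordBall_of_wlen_le (hsym : S⁻¹ = S) (hgen : Subgroup.closure S = ⊤) {g : Γ}
    {n : ℕ} (h : wlen S g ≤ n) : g ∈ wordBall S n :=
  wordBall_mono h (Nat.sInf_mem (exists_mem_wordBall hsym hgen g))

lemma finite_wordBall (hS : S.Finite) (n : ℕ) : (wordBall S n).Finite := by
  have : Finite S := hS
  refine ((List.finite_length_le S n).image fun l => (l.map (↑)).prod).subset ?_
  rintro _ ⟨l, hl, hlS, rfl⟩
  lift l to List S using hlS
  exact ⟨l, by simpa using hl, rfl⟩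

lemma exists_mk_eq_wlen_le_of_mem_schreierBall {C : Subgroup Γ} {n : ℕ} {x : Γ ⧸ C}
    (hx : x ∈ schreierBall S C n) : ∃ g : Γ, (g : Γ ⧸ C) = x ∧ wlen S g ≤ n := by
  obtain ⟨g, hg, hlen⟩ : ∃ g : Γ, (g : Γ ⧸ C) = x ∧ wlen S g ≤ cosetLen S C x :=
    Nat.sInf_mem (⟨_, x.out, QuotientGroup.out_eq' x, le_rfl⟩ :
      {m | ∃ g : Γ, (g : Γ ⧸ C) = x ∧ wlen S g ≤ m}.Nonempty)
  exact ⟨g, hg, hlen.trans hx⟩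

end WordBall

section Center

variable {Γ : Type*} [Group Γ]

lemma center_eq_centralizer_of_closure_eq_top {S : Set Γ} (hgen : Subgroup.closure S = ⊤) :
    Subgroup.center Γ = Subgroup.centralizer S := by
  rw [← Subgroup.centralizer_univ, ← Subgroup.coe_top, ← hgen, Subgroup.centralizer_closure]

lemma conj_eq_conj_iff_commute {a b s : Γ} :
    a⁻¹ * s * a = b⁻¹ * s * b ↔ Commute s (a * b⁻¹) := by
  constructor <;> intro h
  · calc s * (a * b⁻¹) = a * (a⁻¹ * s * a) * b⁻¹ := by group
      _ = a * b⁻¹ * s := by rw [h]; group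
  · calc a⁻¹ * s * a = a⁻¹ * (s * (a * b⁻¹)) * b := by group
      _ = b⁻¹ * s * b := by rw [h]; group

lemma conj_mul_of_mem_center {g z : Γ} (hz : z ∈ Subgroup.center Γ) (s : Γ) :
    (g * z)⁻¹ * s * (g * z) = g⁻¹ * s * g :=
  calc (g * z)⁻¹ * s * (g * z) = z⁻¹ * (g⁻¹ * s * g * z) := by group
    _ = g⁻¹ * s * g := by rw [Subgroup.mem_center_iff.mp hz, inv_mul_cancel_left]

lemma mk_eq_mk_iff_forall_conj_eq {S : Set Γ} (hgen : Subgroup.closure S = ⊤) {a b : Γ} :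
    (a : Γ ⧸ Subgroup.center Γ) = b ↔ ∀ s ∈ S, a⁻¹ * s * a = b⁻¹ * s * b := by
  simp only [QuotientGroup.eq_iff_div_mem, center_eq_centralizer_of_closure_eq_top hgen,
    Subgroup.mem_centralizer_iff, conj_eq_conj_iff_commute, div_eq_mul_inv, Commute, SemiconjBy]

end Center

lemma Set.ncard_univ_pi {ι : Type*} [Fintype ι] {α : ι → Type*} (t : ∀ i, Set (α i)) :
    (Set.univ.pi t).ncard = ∏ i, (t i).ncard := by
  rw [← Nat.card_coe_set_eq, Nat.card_congr (Equiv.Set.univPi t), Nat.card_pi]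
  simp only [Nat.card_coe_set_eq]

theorem ncard_schreierBall_center_le {Γ : Type*} [Group Γ] {S : Finset Γ}
    (hsym : (S : Set Γ)⁻¹ = S) (hgen : Subgroup.closure (S : Set Γ) = ⊤) (n : ℕ) :
    (schreierBall (S : Set Γ) (Subgroup.center Γ) n).ncard ≤
      ∏ s ∈ S, (conjClass s ∩ wordBall (S : Set Γ) (2 * n + 1)).ncard := by
  set t : S → Set Γ := fun s => conjClass (s : Γ) ∩ wordBall (S : Set Γ) (2 * n + 1)
  set f : Γ ⧸ Subgroup.center Γ → S → Γ := fun x s => x.out⁻¹ * s * x.out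
  have hf : Function.Injective f := fun x y hxy => by
    rw [← QuotientGroup.out_eq' x, ← QuotientGroup.out_eq' y]
    exact (mk_eq_mk_iff_forall_conj_eq hgen).2 fun s hs => congrFun hxy ⟨s, hs⟩
  have hmaps : ∀ x ∈ schreierBall (S : Set Γ) (Subgroup.center Γ) n, f x ∈ Set.univ.pi t := by
    intro x hx s _
    obtain ⟨g, rfl, hg⟩ := exists_mk_eq_wlen_le_of_mem_schreierBall hx
    have hfg : f g s = g⁻¹ * s * g :=
      (mk_eq_mk_iff_forall_conj_eq hgen).1 (QuotientGroup.out_eq' _) s s.2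
    exact ⟨⟨_, rfl⟩, hfg ▸ conj_mem_wordBall hsym (mem_wordBall_of_wlen_le hsym hgen hg) s.2⟩
  have ht : (Set.univ.pi t).Finite :=
    Set.Finite.pi fun _ => (finite_wordBall S.finite_toSet _).inter_of_right _
  calc _ ≤ (Set.univ.pi t).ncard := Set.ncard_le_ncard_of_injOn f hmaps hf.injOn ht
    _ = _ := by
      rw [Set.ncard_univ_pi]
      exact Finset.prod_coe_sort S fun s => (conjClass s ∩ wordBall (S : Set Γ) (2 * n + 1)).ncard

/-- The map `gZ ↦ (g⁻¹ s g)_{s ∈ S}` on `Γ/Z(Γ)` is well defined and injective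
(first clause); a coset with a representative of length `≤ n` is sent into
`∏_{s ∈ S} B_{2n+1}` (second clause); hence the Schreier ball of `Γ/Z(Γ)` is at
most as large as `∏_{s ∈ S} |Cl(s) ∩ B_{2n+1}|` (third clause). -/
theorem stmt3 (Γ : Type*) [Group Γ] (S : Finset Γ) (hsym : (S : Set Γ)⁻¹ = (S : Set Γ))
    (hgen : Subgroup.closure (S : Set Γ) = ⊤) :
    (∀ a b : Γ,
      (QuotientGroup.mk a : Γ ⧸ Subgroup.center Γ) = QuotientGroup.mk b ↔
        ∀ s ∈ S, a⁻¹ * s * a = b⁻¹ * s * b) ∧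
    (∀ (g : Γ) (n : ℕ),
      (∃ z ∈ Subgroup.center Γ, wlen (S : Set Γ) (g * z) ≤ n) →
        ∀ s ∈ S, g⁻¹ * s * g ∈ wordBall (S : Set Γ) (2 * n + 1)) ∧
    (∀ n : ℕ,
      (schreierBall (S : Set Γ) (Subgroup.center Γ) n).ncard ≤
        ∏ s ∈ S, (conjClass s ∩ wordBall (S : Set Γ) (2 * n + 1)).ncard) := by
  refine ⟨fun a b => mk_eq_mk_iff_forall_conj_eq hgen, ?_, ncard_schreierBall_center_le hsym hgen⟩
  rintro g n ⟨z, hz, hlen⟩ s hs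
  rw [← conj_mul_of_mem_center hz]
  exact conj_mem_wordBall hsym (mem_wordBall_of_wlen_le hsym hgen hlen) hs
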